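/- For any M-monadic proper expression E over Σ and any word w ∈ Σ*, the weight of w equals the derivative of E by w bound with nullability: weight_w(E) = d_w(E) >>= Null. -/

import Mathlib

/-- `M`-monadic expressions over an alphabet `A`, where `K = M(𝟙)`. -/
inductive MExp (A K : Type) : Type
  | sym : A → MExp A K
  | eps : MExp A K
  | empty : MExp A K
  | plus : MExp A K → MExp A K → MExp A K
  | times : MExp A K → MExp A K → MExp A K
  | star : MExp A K → MExp A K
  | lact : K → MExp A K → MExp A K
  | ract : MExp A K → K → MExp A K
  | fn : (n : ℕ) → ((Fin n → K) → K) → (Fin n → MExp A K) → MExp A K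

variable {A K : Type}

/-- The nullability value (for star, `1`, valid on proper expressions). -/
def MExp.null [Semiring K] : MExp A K → K
  | .sym _ => 0
  | .eps => 1
  | .empty => 0
  | .plus e₁ e₂ => e₁.null + e₂.null
  | .times e₁ e₂ => e₁.null * e₂.null
  | .star _ => 1
  | .lact k e => k * e.null
  | .ract e k => e.null * k
  | .fn _ f es => f (fun i => (es i).null)

/-- Properness: every starred subexpression has a null nullability value. -/
def MExp.IsProper [Semiring K] : MExp A K → Prop
  | .sym _ | .eps | .empty => True
  | .plus e₁ e₂ | .times e₁ e₂ => e₁.IsProper ∧ e₂.IsProper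
  | .star e => e.IsProper ∧ e.null = 0
  | .lact _ e | .ract e _ => e.IsProper
  | .fn _ _ es => ∀ i, (es i).IsProper

/-- Cauchy product of series. -/
def cauchy [Semiring K] (S₁ S₂ : List A → K) : List A → K :=
  fun w => ∑ i ∈ Finset.range (w.length + 1), S₁ (w.take i) * S₂ (w.drop i)

/-- Star of a series: sum over factorizations into nonempty factors. -/
def starSeries [Semiring K] (S : List A → K) : List A → K
  | [] => 1
  | w => ∑ c : Composition w.length, ((w.splitWrtComposition c).map S).prod

/-- The series associated with an expression. -/
def MExp.series [Semiring K] [DecidableEq A] : MExp A K → List A → K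
  | .sym a, w => if w = [a] then 1 else 0
  | .eps, w => if w = [] then 1 else 0
  | .empty, _ => 0
  | .plus e₁ e₂, w => e₁.series w + e₂.series w
  | .times e₁ e₂, w => cauchy e₁.series e₂.series w
  | .star e, w => starSeries e.series w
  | .lact k e, w => k * e.series w
  | .ract e k, w => e.series w * k
  | .fn _ f es, w => f (fun i => (es i).series w)

/-- The weight associated with a word `w` by an expression `E`: `weight_w(E) = S(E)(w)`. -/
def MExp.weight [Semiring K] [DecidableEq A] (w : List A) (E : MExp A K) : K := E.series w

/-- An expressive support for a monad `M`: a monoid `(M(Exp(Σ)), ±, 0̲)`, a right action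
`⋉` of expressions, left and right actions `▷`, `◁` of `M(𝟙)`, an operad-module action
`⋇` of functions over `M(𝟙)`, and a function `toExp` compatible with all operations
(where two expressions denoting the same series are identified). -/
structure ExpressiveSupport (M : Type → Type) (A : Type) [Monad M]
    [Semiring (M PUnit)] [DecidableEq A] where
  pm : M (MExp A (M PUnit)) → M (MExp A (M PUnit)) → M (MExp A (M PUnit))
  zero : M (MExp A (M PUnit))
  ltimes : M (MExp A (M PUnit)) → MExp A (M PUnit) → M (MExp A (M PUnit))
  lactM : M PUnit → M (MExp A (M PUnit)) → M (MExp A (M PUnit))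
  ractM : M (MExp A (M PUnit)) → M PUnit → M (MExp A (M PUnit))
  fapp : (n : ℕ) → ((Fin n → M PUnit) → M PUnit) →
    (Fin n → M (MExp A (M PUnit))) → M (MExp A (M PUnit))
  toExp : M (MExp A (M PUnit)) → MExp A (M PUnit)
  /-- monoid laws for `±` with unit `0̲` -/
  pm_assoc : ∀ m₁ m₂ m₃, pm (pm m₁ m₂) m₃ = pm m₁ (pm m₂ m₃)
  pm_zero : ∀ m, pm m zero = m
  zero_pm : ∀ m, pm zero m = m
  /-- `weight_w(toExp(m)) = m >>= weight_w` -/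
  weight_toExp : ∀ (w : List A) m, (toExp m).weight w = m >>= MExp.weight w
  /-- `toExp(m ⋉ F) = toExp(m) · F` -/
  toExp_ltimes : ∀ m F w, (toExp (ltimes m F)).series w = ((toExp m).times F).series w
  /-- `toExp(m ± m') = toExp(m) + toExp(m')` -/
  toExp_pm : ∀ m m' w, (toExp (pm m m')).series w = ((toExp m).plus (toExp m')).series w
  /-- `toExp(α ▷ m) = α ⊙ toExp(m)` -/
  toExp_lact : ∀ α m w, (toExp (lactM α m)).series w = (MExp.lact α (toExp m)).series w
  /-- `toExp(m ◁ α) = toExp(m) ⊙ α` -/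
  toExp_ract : ∀ m α w, (toExp (ractM m α)).series w = (MExp.ract (toExp m) α).series w
  /-- `toExp(f ⋇ (m₁,…,mₙ)) = f(toExp(m₁),…,toExp(mₙ))` -/
  toExp_fapp : ∀ n f ms w,
    (toExp (fapp n f ms)).series w = (MExp.fn n f (fun i => toExp (ms i))).series w

variable {M : Type → Type} [Monad M] [Semiring (M PUnit)] [DecidableEq A]

/-- The monadic derivative of an expression w.r.t. a symbol. -/
def mderiv (sup : ExpressiveSupport M A) (a : A) :
    MExp A (M PUnit) → M (MExp A (M PUnit))
  | .sym b => if a = b then pure MExp.eps else sup.zero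
  | .eps => sup.zero
  | .empty => sup.zero
  | .plus e₁ e₂ => sup.pm (mderiv sup a e₁) (mderiv sup a e₂)
  | .times e₁ e₂ =>
      sup.pm (sup.ltimes (mderiv sup a e₁) e₂) (sup.lactM e₁.null (mderiv sup a e₂))
  | .star e => sup.ltimes (mderiv sup a e) (MExp.star e)
  | .lact α e => sup.lactM α (mderiv sup a e)
  | .ract e α => sup.ractM (mderiv sup a e) α
  | .fn n f es => sup.fapp n f (fun i => mderiv sup a (es i))

/-- The derivative w.r.t. a word: `d_ε(E) = pure E`, `d_{a·v}(E) = d_a(E) >>= d_v`. -/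
def mderivW (sup : ExpressiveSupport M A) :
    List A → MExp A (M PUnit) → M (MExp A (M PUnit))
  | [], E => pure E
  | a :: v, E => mderiv sup a E >>= mderivW sup v

/-!
Induction on `w` along `weight_{aw}(E) = d_a(E) >>= weight_w`, which holds for every expression
by structural induction, because `toExp` turns each clause of `mderiv` into the corresponding
operation on series. The one combinatorial input is the star: splitting off the first factor of
a factorization of `aw` gives `S*(aw) = Σ_{uv = w} S(au) S*(v)`.
-/

namespace Composition

variable {n : ℕ}

theorem blocks_head!_add_sum_tail (c : Composition (n + 1)) :
    c.blocks.head! + c.blocks.tail.sum = n + 1 := by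
  rw [← List.sum_cons, List.cons_head!_tail (by simp [blocks_eq_nil]), c.blocks_sum]

theorem blocks_head!_pos (c : Composition (n + 1)) : 0 < c.blocks.head! :=
  c.blocks_pos (List.head!_mem_self (by simp [blocks_eq_nil]))

def succEquiv (n : ℕ) : Composition (n + 1) ≃ Σ i : Fin (n + 1), Composition (n - i) where
  toFun c := ⟨⟨c.blocks.head! - 1, by have := c.blocks_head!_add_sum_tail; omega⟩,
    ⟨c.blocks.tail, fun h => c.blocks_pos (List.mem_of_mem_tail h),
      by have := c.blocks_head!_add_sum_tail; have := c.blocks_head!_pos; simp only; omega⟩⟩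
  invFun p := ⟨(p.1 + 1) :: p.2.blocks, by
      rintro k (_ | ⟨_, hk⟩)
      exacts [Nat.succ_pos _, p.2.blocks_pos hk],
    by have := p.2.blocks_sum; have := p.1.isLt; simp only [List.sum_cons]; omega⟩
  left_inv c := by
    ext1
    dsimp only
    rw [Nat.sub_add_cancel c.blocks_head!_pos, List.cons_head!_tail (by simp [blocks_eq_nil])]
  right_inv _ := rfl

theorem sum_succ {M : Type*} [AddCommMonoid M] (f : Composition (n + 1) → M) :
    ∑ c, f c =
      ∑ i : Fin (n + 1), ∑ c : Composition (n - i), f ((succEquiv n).symm ⟨i, c⟩) := by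
  rw [← (succEquiv n).symm.sum_comp, Fintype.sum_sigma]

@[simp]
theorem blocks_succEquiv_symm (i : Fin (n + 1)) (c : Composition (n - i)) :
    ((succEquiv n).symm ⟨i, c⟩).blocks = (i + 1 : ℕ) :: c.blocks := rfl

instance : Subsingleton (Composition 0) :=
  ⟨fun c c' => Composition.ext ((c.blocks_eq_nil.2 rfl).trans (c'.blocks_eq_nil.2 rfl).symm)⟩

end Composition

section Series

variable [Semiring K]

omit [DecidableEq A]

theorem starSeries_eq_sum (S : List A → K) (w : List A) :
    starSeries S w = ∑ c : Composition w.length, ((w.splitWrtComposition c).map S).prod := by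
  cases w with
  | nil => simp [starSeries, Fintype.sum_subsingleton _ (Composition.ones 0),
      List.splitWrtComposition, List.splitWrtCompositionAux, Composition.ones]
  | cons => rfl

theorem starSeries_cons (S : List A → K) (a : A) (w : List A) :
    starSeries S (a :: w) = cauchy (fun v => S (a :: v)) (starSeries S) w := by
  rw [cauchy, ← Fin.sum_univ_eq_sum_range]
  refine (Composition.sum_succ _).trans <| Finset.sum_congr rfl fun i _ => ?_
  rw [starSeries_eq_sum, Finset.mul_sum, List.length_drop]
  refine Finset.sum_congr rfl fun c _ => ?_
  simp only [List.splitWrtComposition, Composition.blocks_succEquiv_symm,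
    List.splitWrtCompositionAux_cons, List.map_cons, List.prod_cons,
    List.drop_succ_cons, List.take_succ_cons]

theorem cauchy_cons (S₁ S₂ : List A → K) (a : A) (w : List A) :
    cauchy S₁ S₂ (a :: w) =
      cauchy (fun v => S₁ (a :: v)) S₂ w + S₁ [] * S₂ (a :: w) := by
  rw [cauchy, List.length_cons, Finset.sum_range_succ', cauchy]
  rfl

end Series

theorem MExp.series_nil [Semiring K] (E : MExp A K) : E.series [] = E.null := by
  induction E with
  | times => simp_all [series, null, cauchy]
  | _ => simp_all [series, null, starSeries]

section

variable (sup : ExpressiveSupport M A)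

theorem ExpressiveSupport.series_toExp_zero (w : List A) :
    (sup.toExp sup.zero).series w = 0 := by
  -- `M PUnit` need not be additively cancellative, so we cancel `0̲` against an operand of
  -- series `0`: the nullary function with value `0`.
  have h := congrArg (fun m => (sup.toExp m).series w)
    (sup.pm_zero (sup.fapp 0 (fun _ => 0) nofun))
  simpa only [sup.toExp_pm, sup.toExp_fapp, MExp.series, zero_add] using h

variable [LawfulMonad M]

theorem series_toExp_mderiv (a : A) (E : MExp A (M PUnit)) :
    (sup.toExp (mderiv sup a E)).series = fun w => E.series (a :: w) := by
  induction E with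
  | sym b =>
    funext w
    by_cases hab : a = b
    · subst hab
      rw [mderiv, if_pos rfl, ← MExp.weight, sup.weight_toExp, pure_bind]
      simp [MExp.weight, MExp.series]
    · simp [mderiv, hab, sup.series_toExp_zero, MExp.series]
  | eps | empty => funext w; simp [mderiv, sup.series_toExp_zero, MExp.series]
  | plus e₁ e₂ ih₁ ih₂ =>
    funext w
    simp only [mderiv, sup.toExp_pm, MExp.series, ih₁, ih₂]
  | times e₁ e₂ ih₁ ih₂ =>
    funext w
    simp only [mderiv, sup.toExp_pm, sup.toExp_ltimes, sup.toExp_lact, MExp.series, ih₁, ih₂,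
      cauchy_cons, MExp.series_nil]
  | star e ih =>
    funext w
    simp only [mderiv, sup.toExp_ltimes, MExp.series, ih, starSeries_cons]
  | lact k e ih => funext w; simp only [mderiv, sup.toExp_lact, MExp.series, ih]
  | ract e k ih => funext w; simp only [mderiv, sup.toExp_ract, MExp.series, ih]
  | fn n f es ih => funext w; simp only [mderiv, sup.toExp_fapp, MExp.series, ih]

theorem MExp.weight_cons (E : MExp A (M PUnit)) (a : A) (w : List A) :
    E.weight (a :: w) = mderiv sup a E >>= MExp.weight w := by
  rw [← sup.weight_toExp, MExp.weight, MExp.weight, series_toExp_mderiv]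

end

theorem weight_eq_derivW_bind_null_general [LawfulMonad M]
    (sup : ExpressiveSupport M A) (E : MExp A (M PUnit))
    (w : List A) :
    E.weight w = mderivW sup w E >>= MExp.null := by
  induction w generalizing E with
  | nil => rw [mderivW, pure_bind, MExp.weight, MExp.series_nil]
  | cons a w ih =>
    rw [MExp.weight_cons sup, mderivW, bind_assoc]
    exact congrArg _ (funext ih)

/-- For any proper `M`-monadic expression `E` and word `w`, the weight of `w` equals the
derivative of `E` by `w` bound with nullability: `weight_w(E) = d_w(E) >>= Null`. -/
theorem weight_eq_derivW_bind_null [LawfulMonad M]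
    (sup : ExpressiveSupport M A) (E : MExp A (M PUnit)) (hE : E.IsProper)
    (w : List A) :
    E.weight w = mderivW sup w E >>= MExp.null :=
  weight_eq_derivW_bind_null_general sup E w
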